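/- arXiv:1904.02291 — 2 statements merged into one kernel-verified Lean document; each statement's English description precedes it below -/
import Mathlib

section
/- Define R_n(q, x) = Σ_{i=0}^{n} C(n,i) (q + ix/n)^i (1 - q - ix/n)^{n-i} (with the convention that the i = n = 0 term is 1). Then for every non-negative integer n and all real numbers q and x, R_n(q, x) = R_n(0, x); i.e., R_n(q, x) does not depend on q. -/
open Real Finset MeasureTheory

noncomputable def klBin (q p : ℝ) : ℝ :=
  q * Real.log (q / p) + (1 - q) * Real.log ((1 - q) / (1 - p))

noncomputable def klVec {k : ℕ} (q p : Fin k → ℝ) : ℝ :=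
  ∑ i, q i * Real.log (q i / p i)

noncomputable def binomPMF (n : ℕ) (p : ℝ) (i : ℕ) : ℝ :=
  (n.choose i : ℝ) * p ^ i * (1 - p) ^ (n - i)

def multSupport (n k : ℕ) : Finset (Fin k → ℕ) :=
  (Fintype.piFinset fun _ => Finset.range (n + 1)).filter fun x => ∑ i, x i = n

noncomputable def multPMF (n : ℕ) {k : ℕ} (p : Fin k → ℝ) (x : Fin k → ℕ) : ℝ :=
  ((n.factorial : ℝ) / ∏ i, ((x i).factorial : ℝ)) * ∏ i, p i ^ x i

noncomputable def Rfun (n : ℕ) (q x : ℝ) : ℝ :=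
  ∑ i ∈ Finset.range (n + 1),
    (n.choose i : ℝ) * (q + (i : ℝ) * x / n) ^ i * (1 - q - (i : ℝ) * x / n) ^ (n - i)

/-! Freeing the step `c = x / n` from the number of terms, the sum
`S_m(q) = ∑ C(m, j) (q + j c)^j (1 - q - j c)^(m - j)` satisfies, by `j C(m, j) = m C(m-1, j-1)` and
`(m - j) C(m, j) = m C(m-1, j)`, the relation `S_m'(q) = m (S_{m-1}(q + c) - S_{m-1}(q))`.
By induction on `m`, `S_{m-1}` is constant, hence `S_m' = 0` and `S_m` is constant too. -/

section BinomialShift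

variable {R : Type*} [CommRing R]

lemma sum_choose_succ_mul_index (n : ℕ) (f : ℕ → R) :
    ∑ j ∈ range (n + 2), ((n + 1).choose j : R) * (j * f j) =
      (n + 1) * ∑ k ∈ range (n + 1), (n.choose k : R) * f (k + 1) := by
  rw [sum_range_succ', mul_sum]
  refine (add_eq_left.mpr (by simp)).trans (sum_congr rfl fun k _ => ?_)
  have h := congrArg (Nat.cast : ℕ → R) (Nat.add_one_mul_choose_eq n k)
  push_cast at h ⊢
  linear_combination -f (k + 1) * h

lemma sum_choose_succ_mul_sub_index (n : ℕ) (f : ℕ → R) :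
    ∑ j ∈ range (n + 2), ((n + 1).choose j : R) * ((n + 1 - j : ℕ) * f j) =
      (n + 1) * ∑ j ∈ range (n + 1), (n.choose j : R) * f j := by
  rw [sum_range_succ, mul_sum, Nat.sub_self, Nat.cast_zero, zero_mul, mul_zero, add_zero]
  refine sum_congr rfl fun j _ => ?_
  have h := congrArg (Nat.cast : ℕ → R) (Nat.choose_mul_succ_eq n j)
  push_cast at h ⊢
  linear_combination -f j * h

end BinomialShift

lemma hasDerivAt_add_pow_mul_one_sub_sub_pow (a q : ℝ) (j k : ℕ) :
    HasDerivAt (fun q => (q + a) ^ j * (1 - q - a) ^ k)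
      (j * ((q + a) ^ (j - 1) * (1 - q - a) ^ k) -
        k * ((q + a) ^ j * (1 - q - a) ^ (k - 1))) q := by
  have hl : HasDerivAt (fun q => q + a) 1 q := (hasDerivAt_id q).add_const a
  have hr : HasDerivAt (fun q => 1 - q - a) (-1) q := ((hasDerivAt_id q).const_sub 1).sub_const a
  refine ((hl.fun_pow j).fun_mul (hr.fun_pow k)).congr_deriv ?_
  ring

noncomputable def abelSum (m : ℕ) (c q : ℝ) : ℝ :=
  ∑ j ∈ range (m + 1), (m.choose j : ℝ) * ((q + j * c) ^ j * (1 - q - j * c) ^ (m - j))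

lemma hasDerivAt_abelSum_succ (n : ℕ) (c q : ℝ) :
    HasDerivAt (abelSum (n + 1) c) ((n + 1) * (abelSum n c (q + c) - abelSum n c q)) q := by
  have hterm (j : ℕ) := (hasDerivAt_add_pow_mul_one_sub_sub_pow (j * c) q j (n + 1 - j)).const_mul
    ((n + 1).choose j : ℝ)
  refine (HasDerivAt.fun_sum (u := range (n + 2)) fun j _ => hterm j).congr_deriv ?_
  simp only [mul_sub, sum_sub_distrib]
  rw [sum_choose_succ_mul_index, sum_choose_succ_mul_sub_index, abelSum, abelSum]
  congr 2
  · refine sum_congr rfl fun j _ => ?_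
    push_cast
    ring
  · simp only [Nat.sub_sub, Nat.add_sub_add_right]

lemma abelSum_eq_abelSum_zero (m : ℕ) (c q : ℝ) : abelSum m c q = abelSum m c 0 := by
  induction m generalizing q with
  | zero => simp [abelSum]
  | succ n ih =>
    have hderiv (q : ℝ) : HasDerivAt (abelSum (n + 1) c) 0 q := by
      simpa [ih (q + c), ih q] using hasDerivAt_abelSum_succ n c q
    exact is_const_of_deriv_eq_zero (fun q => (hderiv q).differentiableAt)
      (fun q => (hderiv q).deriv) q 0

theorem Rfun_const (n : ℕ) (q x : ℝ) : Rfun n q x = Rfun n 0 x := by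
  have hR (q : ℝ) : Rfun n q x = abelSum n (x / n) q := by
    simp only [Rfun, abelSum, mul_div_assoc, mul_assoc]
  rw [hR, hR, abelSum_eq_abelSum_zero]
end

section
/- Suppose f : [0,1) → ℝ satisfies: for every positive integer m, every t ∈ [0, m), and every p ∈ [0,1], E[exp(t · KL((B/m, 1 - B/m) ‖ (p, 1-p)))] ≤ f(t/m) where B ~ Binomial(m, p). Then for every k ≥ 2, every positive integer n, every probability vector P on k letters, and every t ∈ [0, n), E[exp(t · KL((X_1/n, ..., X_k/n) ‖ P))] ≤ f(t/n)^{k-1}, where (X_1, ..., X_k) ~ Multinomial(n, P). -/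
open Real Finset MeasureTheory

/-!
Induction on the number of letters. Given the count `m` of the first letter, the other counts `y`
are multinomial with `n - m` draws from the renormalised tail `p'` of `p`, and the chain rule
`KL(x/n ‖ p) = KL((m/n, 1 - m/n) ‖ (p₀, 1 - p₀)) + (1 - m/n) KL(y/(n - m) ‖ p')`
splits `exp (t KL)` into a binomial factor and the tail factor with `t` replaced by `t (n - m) / n`.
The rate `t / n` is unchanged, so by induction the tail contributes at most `f (t / n) ^ (k - 2)`
and the remaining binomial sum at most `f (t / n)`. The case of no draws needs `1 ≤ f (t / n)`,
which is the hypothesis applied to a point mass.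
-/

lemma mem_multSupport {n k : ℕ} {x : Fin k → ℕ} : x ∈ multSupport n k ↔ ∑ i, x i = n := by
  simp only [multSupport, mem_filter, Fintype.mem_piFinset, mem_range, and_iff_right_iff_imp]
  intro h i
  have : x i ≤ ∑ j, x j := single_le_sum (fun j _ => Nat.zero_le _) (mem_univ i)
  omega

lemma sum_multSupport_succ {M : Type*} [AddCommMonoid M] {n k : ℕ} (g : (Fin (k + 1) → ℕ) → M) :
    ∑ x ∈ multSupport n (k + 1), g x =
      ∑ m ∈ range (n + 1), ∑ y ∈ multSupport (n - m) k, g (Fin.cons m y) := by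
  rw [sum_sigma']
  refine sum_nbij' (fun x => ⟨x 0, Fin.tail x⟩) (fun a => Fin.cons a.1 a.2) ?_ ?_ ?_ ?_ ?_
  · intro x hx
    rw [mem_multSupport, Fin.sum_univ_succ] at hx
    simp only [mem_sigma, mem_range, mem_multSupport, Fin.tail]
    omega
  · rintro ⟨m, y⟩ h
    simp only [mem_sigma, mem_range, mem_multSupport] at h
    rw [mem_multSupport, Fin.sum_univ_succ]
    simp only [Fin.cons_zero, Fin.cons_succ]
    omega
  · intro x _
    exact Fin.cons_self_tail x
  · rintro ⟨m, y⟩ _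
    simp only [Fin.cons_zero, Fin.tail_cons]
  · intro x _
    rw [Fin.cons_self_tail]

lemma binomPMF_nonneg {n : ℕ} {q : ℝ} (hq0 : 0 ≤ q) (hq1 : q ≤ 1) (i : ℕ) : 0 ≤ binomPMF n q i :=
  have : 0 ≤ 1 - q := sub_nonneg.mpr hq1
  by unfold binomPMF; positivity

lemma multPMF_eq_zero {n k : ℕ} {p : Fin k → ℝ} {x : Fin k → ℕ} {i : Fin k}
    (hp : p i = 0) (hx : x i ≠ 0) : multPMF n p x = 0 :=
  mul_eq_zero_of_right _ (prod_eq_zero (mem_univ i) (by rw [hp, zero_pow hx]))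

/- `p'` is the law of the remaining letters given that the first one is not drawn. Stating `hp'`
multiplicatively keeps it meaningful when `p 0 = 1`, where any `p'` will do. -/
lemma multPMF_cons {n m k : ℕ} {p : Fin (k + 1) → ℝ} {p' : Fin k → ℝ} {y : Fin k → ℕ}
    (hp' : ∀ i, p i.succ = (1 - p 0) * p' i) (hm : m ≤ n) (hy : ∑ i, y i = n - m) :
    multPMF n p (Fin.cons m y) = binomPMF n (p 0) m * multPMF (n - m) p' y := by
  have hfac : (n.choose m : ℝ) * m.factorial * (n - m).factorial = n.factorial := by
    exact_mod_cast Nat.choose_mul_factorial_mul_factorial hm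
  simp only [multPMF, binomPMF, Fin.prod_univ_succ, Fin.cons_zero, Fin.cons_succ, hp', mul_pow,
    prod_mul_distrib, prod_pow_eq_pow_sum, hy, ← hfac]
  field_simp

lemma klVec_cons {k : ℕ} {a : ℝ} {b p' : Fin k → ℝ} {p : Fin (k + 1) → ℝ}
    (hsum : a + ∑ i, b i = 1) (hb : ∀ i, 0 ≤ b i) (hp' : ∀ i, p i.succ = (1 - p 0) * p' i)
    (hsupp : ∀ i, b i ≠ 0 → p i.succ ≠ 0) :
    klVec (Fin.cons a b) p = klBin a (p 0) + (1 - a) * klVec (fun i => b i / (1 - a)) p' := by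
  have hrest : 1 - a = ∑ i, b i := by linarith
  have key : ∀ i, b i * log (b i / p i.succ) = b i * log ((1 - a) / (1 - p 0)) +
      (1 - a) * (b i / (1 - a) * log (b i / (1 - a) / p' i)) := by
    intro i
    rcases eq_or_ne (b i) 0 with hbi | hbi
    · simp [hbi]
    have hpi := hsupp i hbi
    rw [hp'] at hpi ⊢
    have h1a : 1 - a ≠ 0 := by
      rw [hrest]
      exact ((hb i).lt_of_ne' hbi |>.trans_le (single_le_sum (fun j _ => hb j) (mem_univ i))).ne'
    rw [show b i / ((1 - p 0) * p' i) = (1 - a) / (1 - p 0) * (b i / (1 - a) / p' i) by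
        field_simp, log_mul (div_ne_zero h1a (left_ne_zero_of_mul hpi))
        (div_ne_zero (div_ne_zero hbi h1a) (right_ne_zero_of_mul hpi))]
    field_simp
  simp only [klVec, klBin, Fin.sum_univ_succ, Fin.cons_zero, Fin.cons_succ, key, sum_add_distrib,
    ← sum_mul, ← mul_sum, ← hrest]
  ring

lemma natCast_mul_klVec_cons {n m k : ℕ} {y : Fin k → ℕ} {p : Fin (k + 1) → ℝ} {p' : Fin k → ℝ}
    (hp' : ∀ i, p i.succ = (1 - p 0) * p' i) (hm : m ≤ n) (hy : ∑ i, y i = n - m)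
    (hsupp : ∀ i, y i ≠ 0 → p i.succ ≠ 0) :
    n * klVec (fun i => ((Fin.cons m y : Fin (k + 1) → ℕ) i : ℝ) / n) p =
      n * klBin (m / n) (p 0) + (n - m : ℕ) * klVec (fun i => (y i : ℝ) / (n - m : ℕ)) p' := by
  rcases Nat.eq_zero_or_pos n with rfl | hn
  · simp
  have hnR : (n : ℝ) ≠ 0 := by positivity
  have hcons : (fun i => ((Fin.cons m y : Fin (k + 1) → ℕ) i : ℝ) / n) =
      Fin.cons ((m : ℝ) / n) (fun i => (y i : ℝ) / n) := by
    funext i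
    cases i using Fin.cases <;> simp
  have hsum : (m : ℝ) / n + ∑ i, (y i : ℝ) / n = 1 := by
    rw [← sum_div, ← Nat.cast_sum, hy, Nat.cast_sub hm]
    field_simp
    ring
  have hrest : 1 - (m : ℝ) / n = (n - m : ℕ) / n := by
    rw [Nat.cast_sub hm]
    field_simp
  have hsupp' : ∀ i, (y i : ℝ) / n ≠ 0 → p i.succ ≠ 0 :=
    fun i h => hsupp i fun hyi => h (by simp [hyi])
  rw [hcons, klVec_cons hsum (fun i => by positivity) hp' hsupp', hrest]
  field_simp

/- Parametrised by `s = t / n` rather than by `t`: conditioning on the first count `m` leaves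
`n - m` draws with exponent `t (n - m) / n`, that is, with the same `s`. -/
noncomputable def binomMGF (n : ℕ) (q s : ℝ) : ℝ :=
  ∑ i ∈ range (n + 1), binomPMF n q i * exp (n * s * klBin (i / n) q)

noncomputable def multMGF {k : ℕ} (n : ℕ) (p : Fin k → ℝ) (s : ℝ) : ℝ :=
  ∑ x ∈ multSupport n k, multPMF n p x * exp (n * s * klVec (fun i => (x i : ℝ) / n) p)

@[simp]
lemma binomMGF_zero_left (q s : ℝ) : binomMGF 0 q s = 1 := by
  simp [binomMGF, binomPMF]

@[simp]
lemma binomMGF_one_one (s : ℝ) : binomMGF 1 1 s = 1 := by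
  simp [binomMGF, binomPMF, klBin, sum_range_succ]

lemma multMGF_eq_sum_binomPMF {n k : ℕ} {p : Fin (k + 1) → ℝ} {p' : Fin k → ℝ}
    (hp' : ∀ i, p i.succ = (1 - p 0) * p' i) (s : ℝ) :
    multMGF n p s = ∑ m ∈ range (n + 1),
      binomPMF n (p 0) m * exp (n * s * klBin (m / n) (p 0)) * multMGF (n - m) p' s := by
  rw [multMGF, sum_multSupport_succ]
  refine sum_congr rfl fun m hm => ?_
  rw [multMGF, mul_sum]
  refine sum_congr rfl fun y hy => ?_
  have hmn : m ≤ n := Nat.lt_succ_iff.mp (mem_range.mp hm)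
  have hy : ∑ i, y i = n - m := mem_multSupport.mp hy
  rw [multPMF_cons hp' hmn hy, mul_mul_mul_comm, ← exp_add]
  -- only terms of nonzero probability matter, and on those the chain rule applies
  refine mul_eq_mul_left_iff.mpr (or_iff_not_imp_right.mpr fun hne => ?_)
  have hsupp : ∀ i, y i ≠ 0 → p i.succ ≠ 0 := fun i hyi hpi => hne <| by
    rw [← multPMF_cons hp' hmn hy]
    exact multPMF_eq_zero (i := i.succ) hpi (by simpa using hyi)
  rw [mul_right_comm, natCast_mul_klVec_cons hp' hmn hy hsupp]
  congr 1
  ring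

lemma multMGF_of_fin_one {n : ℕ} {p : Fin 1 → ℝ} (hp : p 0 = 1) (s : ℝ) : multMGF n p s = 1 := by
  have hsupp : multSupport n 1 = {fun _ => n} := by
    ext x
    simp only [mem_multSupport, Fin.sum_univ_one, mem_singleton, funext_iff, Fin.forall_fin_one]
  rcases eq_or_ne n 0 with rfl | hn
  · simp [multMGF, hsupp, multPMF, hp]
  · simp [multMGF, hsupp, multPMF, klVec, hp, hn, Nat.factorial_ne_zero]

lemma exists_tail_eq_mul {k : ℕ} {p : Fin (k + 2) → ℝ} (hp : ∀ i, 0 ≤ p i) (hp1 : ∑ i, p i = 1) :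
    ∃ p' : Fin (k + 1) → ℝ, (∀ i, 0 ≤ p' i) ∧ ∑ i, p' i = 1 ∧ ∀ i, p i.succ = (1 - p 0) * p' i := by
  have htail : ∑ i : Fin (k + 1), p i.succ = 1 - p 0 := by
    rw [Fin.sum_univ_succ] at hp1
    linarith
  by_cases hq : p 0 = 1
  · refine ⟨fun _ => 1 / (k + 1), fun _ => by positivity, by simp; field_simp, fun i => ?_⟩
    rw [hq, sub_self, zero_mul]
    exact (sum_eq_zero_iff_of_nonneg fun j _ => hp j.succ).mp (by rw [htail, hq, sub_self]) i
      (mem_univ i)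
  · have h1q : 1 - p 0 ≠ 0 := sub_ne_zero.mpr (Ne.symm hq)
    have h1q' : 0 ≤ 1 - p 0 := htail ▸ sum_nonneg fun i _ => hp i.succ
    refine ⟨fun i => p i.succ / (1 - p 0), fun i => div_nonneg (hp _) h1q', ?_, fun i => ?_⟩
    · rw [← sum_div, htail, div_self h1q]
    · field_simp

theorem multMGF_le_pow {s c : ℝ} (hc : ∀ m q, 0 ≤ q → q ≤ 1 → binomMGF m q s ≤ c) {k n : ℕ}
    {p : Fin (k + 1) → ℝ} (hp : ∀ i, 0 ≤ p i) (hp1 : ∑ i, p i = 1) : multMGF n p s ≤ c ^ k := by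
  have hc1 : 1 ≤ c := binomMGF_zero_left 0 s ▸ hc 0 0 le_rfl zero_le_one
  induction k generalizing n with
  | zero => rw [multMGF_of_fin_one (by simpa using hp1), pow_zero]
  | succ k ih =>
    obtain ⟨p', hp'0, hp'1, hp'⟩ := exists_tail_eq_mul hp hp1
    have hq1 : p 0 ≤ 1 := hp1 ▸ single_le_sum (fun i _ => hp i) (mem_univ 0)
    calc multMGF n p s
        = ∑ m ∈ range (n + 1),
            binomPMF n (p 0) m * exp (n * s * klBin (m / n) (p 0)) * multMGF (n - m) p' s :=
          multMGF_eq_sum_binomPMF hp' s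
      _ ≤ ∑ m ∈ range (n + 1), binomPMF n (p 0) m * exp (n * s * klBin (m / n) (p 0)) * c ^ k := by
          gcongr with m
          · exact mul_nonneg (binomPMF_nonneg (hp 0) hq1 m) (exp_pos _).le
          · exact ih hp'0 hp'1
      _ = binomMGF n (p 0) s * c ^ k := by rw [binomMGF, sum_mul]
      _ ≤ c ^ (k + 1) := by
          rw [pow_succ']
          gcongr
          exact hc n (p 0) (hp 0) hq1

theorem multinomial_from_binomial_mgf_bound (f : ℝ → ℝ)
    (hf : ∀ m : ℕ, 1 ≤ m → ∀ t : ℝ, 0 ≤ t → t < m → ∀ p : ℝ, 0 ≤ p → p ≤ 1 →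
      ∑ i ∈ Finset.range (m + 1), binomPMF m p i *
        Real.exp (t * klBin ((i : ℝ) / m) p) ≤ f (t / m))
    (k n : ℕ) (hk : 2 ≤ k) (hn : 1 ≤ n)
    (p : Fin k → ℝ) (hp : ∀ i, 0 ≤ p i) (hp1 : ∑ i, p i = 1)
    (t : ℝ) (ht0 : 0 ≤ t) (htn : t < n) :
    ∑ x ∈ multSupport n k, multPMF n p x *
      Real.exp (t * klVec (fun i => (x i : ℝ) / n) p) ≤ f (t / n) ^ (k - 1) := by
  obtain ⟨k, rfl⟩ : ∃ k', k = k' + 1 := ⟨k - 1, by omega⟩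
  have hnR : (n : ℝ) ≠ 0 := by positivity
  have hs1 : t / n < 1 := (div_lt_one (by positivity)).mpr htn
  have hbinom_pos : ∀ m, 1 ≤ m → ∀ q, 0 ≤ q → q ≤ 1 → binomMGF m q (t / n) ≤ f (t / n) := by
    intro m hm q hq0 hq1
    have hmR : (m : ℝ) ≠ 0 := by positivity
    calc binomMGF m q (t / n) ≤ f (m * (t / n) / m) :=
          hf m hm _ (by positivity) (mul_lt_of_lt_one_right (by positivity) hs1) q hq0 hq1
      _ = f (t / n) := by rw [mul_div_cancel_left₀ _ hmR]
  have hbinom : ∀ m q, 0 ≤ q → q ≤ 1 → binomMGF m q (t / n) ≤ f (t / n) := by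
    rintro (_ | m) q hq0 hq1
    · rw [binomMGF_zero_left, ← binomMGF_one_one (t / n)]
      exact hbinom_pos 1 le_rfl 1 zero_le_one le_rfl
    · exact hbinom_pos (m + 1) (Nat.succ_pos m) q hq0 hq1
  simpa [multMGF, mul_div_cancel₀ t hnR] using multMGF_le_pow (n := n) hbinom hp hp1
end
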